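/- Let R be a commutative Noetherian local ring with maximal ideal 𝔪, let N be a finitely generated R-module, and let t ≥ 1. Then there exists i₀ ≥ 0 such that for every i ≥ i₀ the homomorphism Tor_t^R(N, R/𝔪^i) → Tor_t^R(N, R/𝔪^{i−i₀}) induced by the canonical surjection R/𝔪^i → R/𝔪^{i−i₀} is the zero map; that is, the inverse tower (Tor_t^R(N, R/𝔪^j))_j is nilpotent. -/

import Mathlib

/-!
Shift dimension in the first variable. Write `0 → K → F → N → 0` with `F` finite free; `K` is
finite because `R` is Noetherian. Tensoring a projective resolution `P` of the second argument
with this sequence gives a short exact sequence of complexes whose middle term is exact in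
positive degrees, so the connecting maps embed `Tor_{s+1}(N, -)` naturally into `Tor_s(K, -)`,
and for `s = 0` onto the kernel of `K ⊗ - → F ⊗ -`. This reduces `t` to `t - 1`. For `t = 1` and
the argument `R/I^i`, that kernel is `(K ∩ I^i F)/I^i K`, and the Artin–Rees lemma
`K ∩ I^i F ⊆ I^{i-c} K` (for `i ≥ c`) makes it vanish in `K/I^{i-c} K`.
-/

open CategoryTheory

/-- For `a ≤ b`, the canonical surjection `R ⧸ I^b → R ⧸ I^a` as an `R`-linear map. -/
noncomputable def quotPowMap {R : Type*} [CommRing R] (I : Ideal R) {a b : ℕ} (h : a ≤ b) :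
    (R ⧸ I ^ b) →ₗ[R] (R ⧸ I ^ a) :=
  Submodule.mapQ (I ^ b) (I ^ a) LinearMap.id
    (fun _ hx => Ideal.pow_le_pow_right h hx)

open Limits MonoidalCategory TensorProduct

universe u

namespace CategoryTheory

variable {C D : Type*} [Category* C] [Category* D] [Abelian C] [Abelian D]

lemma Functor.leftDerived_map_eq_zero_iff [HasProjectiveResolutions C] (F : C ⥤ D) [F.Additive]
    (n : ℕ) {X Y : C} (f : X ⟶ Y) (P : ProjectiveResolution X) (Q : ProjectiveResolution Y) :
    (F.leftDerived n).map f = 0 ↔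
      HomologicalComplex.homologyMap ((F.mapHomologicalComplex _).map (P.lift f Q)) n = 0 := by
  rw [F.leftDerived_map_eq n f (P.lift f Q) (P.lift_commutes f Q),
    Preadditive.IsIso.comp_left_eq_zero, Preadditive.IsIso.comp_right_eq_zero]
  rfl

namespace ProjectiveResolution

noncomputable def fromHomologyZero {X : C} (P : ProjectiveResolution X) (F : C ⥤ D) [F.Additive] :
    ((F.mapHomologicalComplex _).obj P.complex).homology 0 ⟶ F.obj X :=
  HomologicalComplex.homologyι _ 0 ≫ P.fromLeftDerivedZero' F

instance {X : C} (P : ProjectiveResolution X) (F : C ⥤ D) [F.Additive]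
    [PreservesFiniteColimits F] : IsIso (P.fromHomologyZero F) := by
  unfold fromHomologyZero
  infer_instance

lemma fromHomologyZero_naturality {X Y : C} (f : X ⟶ Y) (P : ProjectiveResolution X)
    (Q : ProjectiveResolution Y) (F : C ⥤ D) [F.Additive] :
    HomologicalComplex.homologyMap ((F.mapHomologicalComplex _).map (P.lift f Q)) 0 ≫
      Q.fromHomologyZero F = P.fromHomologyZero F ≫ F.map f := by
  rw [fromHomologyZero, HomologicalComplex.homologyι_naturality_assoc, fromHomologyZero,
    Category.assoc, fromLeftDerivedZero'_naturality f P Q _ (P.lift_commutes_zero f Q)]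

lemma fromHomologyZero_natTrans {X : C} (P : ProjectiveResolution X) {F G : C ⥤ D}
    [F.Additive] [G.Additive] (α : F ⟶ G) :
    HomologicalComplex.homologyMap ((NatTrans.mapHomologicalComplex α _).app P.complex) 0 ≫
      P.fromHomologyZero G = P.fromHomologyZero F ≫ α.app X := by
  rw [fromHomologyZero, HomologicalComplex.homologyι_naturality_assoc, fromHomologyZero,
    Category.assoc]
  congr 1
  rw [← cancel_epi (HomologicalComplex.pOpcycles _ 0), HomologicalComplex.p_opcyclesMap_assoc,
    pOpcycles_comp_fromLeftDerivedZero', pOpcycles_comp_fromLeftDerivedZero'_assoc]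
  exact (α.naturality _).symm

end ProjectiveResolution

end CategoryTheory

lemma TensorProduct.tmul_one_eq_zero_iff {R : Type*} [CommRing R] {M : Type*} [AddCommGroup M]
    [Module R M] {J : Ideal R} (m : M) :
    m ⊗ₜ[R] (1 : R ⧸ J) = 0 ↔ m ∈ J • (⊤ : Submodule R M) := by
  rw [← (tensorQuotEquivQuotSMul M J).map_eq_zero_iff, ← map_one (Ideal.Quotient.mk J),
    tensorQuotEquivQuotSMul_tmul_mk, one_smul, Submodule.Quotient.mk_eq_zero]

namespace Ideal

variable {R : Type*} [CommRing R] [IsNoetherianRing R] (I : Ideal R)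
  {K F : Type*} [AddCommGroup K] [Module R K] [AddCommGroup F] [Module R F] [Module.Finite R F]
  {ι : K →ₗ[R] F}

theorem exists_comap_pow_smul_top_le (hι : Function.Injective ι) :
    ∃ c, ∀ i, c ≤ i → (I ^ i • ⊤ : Submodule R F).comap ι ≤ I ^ (i - c) • ⊤ := by
  obtain ⟨c, hc⟩ := I.exists_pow_inf_eq_pow_smul (LinearMap.range ι)
  refine ⟨c, fun i hi k hk => ?_⟩
  rw [← Submodule.comap_map_eq_of_injective hι (I ^ (i - c) • ⊤), Submodule.map_smul'',
    Submodule.map_top]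
  apply Submodule.smul_mono le_rfl inf_le_right
  rw [← hc i hi]
  exact ⟨hk, k, rfl⟩

theorem exists_lTensor_quotPowMap_eq_zero (hι : Function.Injective ι) :
    ∃ c, ∀ i, c ≤ i → ∀ x : K ⊗[R] (R ⧸ I ^ i), ι.rTensor _ x = 0 →
      (quotPowMap I (Nat.sub_le i c)).lTensor K x = 0 := by
  obtain ⟨c, hc⟩ := I.exists_comap_pow_smul_top_le hι
  refine ⟨c, fun i hi x hx => ?_⟩
  obtain ⟨k, rfl⟩ : ∃ k, k ⊗ₜ[R] (1 : R ⧸ I ^ i) = x := by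
    obtain ⟨k, hk⟩ := Submodule.Quotient.mk_surjective _ (tensorQuotEquivQuotSMul K (I ^ i) x)
    exact ⟨k, by rw [← tensorQuotEquivQuotSMul_symm_mk, hk, LinearEquiv.symm_apply_apply]⟩
  rw [LinearMap.rTensor_tmul, tmul_one_eq_zero_iff] at hx
  rw [LinearMap.lTensor_tmul, show quotPowMap I _ 1 = 1 from rfl, tmul_one_eq_zero_iff]
  exact hc i hi hx

end Ideal

namespace ModuleCat

variable {R : Type u} [CommRing R]

instance (X : ModuleCat.{u} R) [Projective X] : Module.Flat R X :=
  have : Module.Projective R X := (IsProjective.iff_projective X).mpr ‹_›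
  inferInstance

lemma exactAt_mapHomologicalComplex_tensorLeft {ι : Type*} {c : ComplexShape ι}
    (A : ModuleCat.{u} R) [Module.Flat R A] {X : HomologicalComplex (ModuleCat.{u} R) c} {i : ι}
    (hX : X.ExactAt i) : (((tensorLeft A).mapHomologicalComplex c).obj X).ExactAt i :=
  hX.map (tensorLeft A)

end ModuleCat

namespace CategoryTheory.ShortComplex

variable {R : Type u} [CommRing R] {ι : Type*} {c : ComplexShape ι}
  (S : ShortComplex (ModuleCat.{u} R))

/-- Reducible, so that its terms are syntactically the complexes
`((tensorLeft A).mapHomologicalComplex c).obj X` on which `Functor.leftDerived` is computed. -/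
noncomputable abbrev tensorComplex (X : HomologicalComplex (ModuleCat.{u} R) c) :
    ShortComplex (HomologicalComplex (ModuleCat.{u} R) c) where
  X₁ := ((tensorLeft S.X₁).mapHomologicalComplex c).obj X
  X₂ := ((tensorLeft S.X₂).mapHomologicalComplex c).obj X
  X₃ := ((tensorLeft S.X₃).mapHomologicalComplex c).obj X
  f := (NatTrans.mapHomologicalComplex ((curriedTensor _).map S.f) c).app X
  g := (NatTrans.mapHomologicalComplex ((curriedTensor _).map S.g) c).app X
  zero := by
    ext i : 1
    exact (S.map (tensorRight (X.X i))).zero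

noncomputable def tensorComplexMap {X Y : HomologicalComplex (ModuleCat.{u} R) c} (φ : X ⟶ Y) :
    S.tensorComplex X ⟶ S.tensorComplex Y where
  τ₁ := ((tensorLeft S.X₁).mapHomologicalComplex c).map φ
  τ₂ := ((tensorLeft S.X₂).mapHomologicalComplex c).map φ
  τ₃ := ((tensorLeft S.X₃).mapHomologicalComplex c).map φ
  comm₁₂ := NatTrans.mapHomologicalComplex_naturality _ φ
  comm₂₃ := NatTrans.mapHomologicalComplex_naturality _ φ

variable {S}

lemma ShortExact.tensorComplex (hS : S.ShortExact) (X : HomologicalComplex (ModuleCat.{u} R) c)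
    [∀ i, Module.Flat R (X.X i)] : (S.tensorComplex X).ShortExact :=
  HomologicalComplex.shortExact_of_degreewise_shortExact _ fun i =>
    hS.map_of_exact (tensorRight (X.X i))

lemma ShortExact.homologyMap_tensorLeft_succ_eq_zero (hS : S.ShortExact) [Module.Flat R S.X₂]
    {X Y : ChainComplex (ModuleCat.{u} R) ℕ} [∀ i, Module.Flat R (X.X i)]
    [∀ i, Module.Flat R (Y.X i)] (φ : X ⟶ Y) {s : ℕ} (hY : Y.ExactAt (s + 1))
    (h : (hS.tensorComplex X).δ (s + 1) s rfl ≫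
      HomologicalComplex.homologyMap (((tensorLeft S.X₁).mapHomologicalComplex _).map φ) s = 0) :
    HomologicalComplex.homologyMap (((tensorLeft S.X₃).mapHomologicalComplex _).map φ)
      (s + 1) = 0 := by
  have := (hS.tensorComplex Y).mono_δ (s + 1) s rfl
    (ModuleCat.exactAt_mapHomologicalComplex_tensorLeft S.X₂ hY).isZero_homology
  refine (cancel_mono ((hS.tensorComplex Y).δ (s + 1) s rfl)).mp ?_
  exact (HomologicalComplex.HomologySequence.δ_naturality (S.tensorComplexMap φ) _ _ _ _ _).symm
    |>.trans (h.trans zero_comp.symm)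

end CategoryTheory.ShortComplex

namespace ModuleCat

variable {R : Type u} [CommRing R]

section Tor

variable {S : ShortComplex (ModuleCat.{u} R)} (hS : S.ShortExact) [Module.Flat R S.X₂]
  {M M' : ModuleCat.{u} R} (f : M ⟶ M')
include hS

lemma Tor_succ_map_eq_zero {s : ℕ} (h : ((Tor (ModuleCat.{u} R) s).obj S.X₁).map f = 0) :
    ((Tor (ModuleCat.{u} R) (s + 1)).obj S.X₃).map f = 0 := by
  let P := CategoryTheory.projectiveResolution M
  let Q := CategoryTheory.projectiveResolution M'
  rw [Tor_obj, Functor.leftDerived_map_eq_zero_iff _ _ f P Q] at h ⊢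
  refine hS.homologyMap_tensorLeft_succ_eq_zero _ (Q.complex_exactAt_succ s) ?_
  rw [h, comp_zero]

lemma Tor_one_map_eq_zero (h : ∀ x, (S.f ▷ M) x = 0 → (S.X₁ ◁ f) x = 0) :
    ((Tor (ModuleCat.{u} R) 1).obj S.X₃).map f = 0 := by
  let P := CategoryTheory.projectiveResolution M
  let Q := CategoryTheory.projectiveResolution M'
  rw [Tor_obj, Functor.leftDerived_map_eq_zero_iff _ _ f P Q]
  refine hS.homologyMap_tensorLeft_succ_eq_zero _ (Q.complex_exactAt_succ 0) ?_
  -- `H₀(S.X₁ ⊗ P) ≅ S.X₁ ⊗ M`, under which the image of `δ` lies in the kernel of `S.f ▷ M`.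
  set δ := (hS.tensorComplex P.complex).δ 1 0 rfl
  have hδ : δ ≫ P.fromHomologyZero (tensorLeft S.X₁) ≫ S.f ▷ M = 0 := by
    have := P.fromHomologyZero_natTrans ((curriedTensor _).map S.f)
    dsimp at this
    rw [← this, ← Category.assoc,
      show δ ≫ _ = 0 from (hS.tensorComplex P.complex).δ_comp 1 0 rfl, zero_comp]
  rw [← cancel_mono (Q.fromHomologyZero (tensorLeft S.X₁)), Category.assoc,
    ProjectiveResolution.fromHomologyZero_naturality, zero_comp]
  ext x
  exact h _ (congr_arg (fun g => g.hom x) hδ)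

end Tor

theorem exists_Tor_map_quotPowMap_eq_zero [IsNoetherianRing R] (I : Ideal R) {t : ℕ}
    (ht : 1 ≤ t) (N : Type u) [AddCommGroup N] [Module R N] [Module.Finite R N] :
    ∃ c, ∀ i, c ≤ i → ((Tor (ModuleCat.{u} R) t).obj (of R N)).map
      (ofHom (quotPowMap I (Nat.sub_le i c))) = 0 := by
  induction t, ht using Nat.le_induction generalizing N with
  | base =>
    obtain ⟨n, φ, hφ⟩ := Module.Finite.exists_fin' R N
    obtain ⟨c, hc⟩ := I.exists_lTensor_quotPowMap_eq_zero (LinearMap.ker φ).injective_subtype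
    exact ⟨c, fun i hi =>
      Tor_one_map_eq_zero (LinearMap.shortExact_shortComplexKer hφ) _ (hc i hi)⟩
  | succ s _ ih =>
    obtain ⟨n, φ, hφ⟩ := Module.Finite.exists_fin' R N
    obtain ⟨c, hc⟩ := ih (LinearMap.ker φ)
    exact ⟨c, fun i hi =>
      Tor_succ_map_eq_zero (LinearMap.shortExact_shortComplexKer hφ) _ (hc i hi)⟩

end ModuleCat

/-- Let `R` be a commutative Noetherian local ring with maximal ideal `𝔪`,
let `N` be a finitely generated `R`-module, and let `t ≥ 1`. Then there exists `i₀ ≥ 0` such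
that for every `i ≥ i₀` the homomorphism
`Tor_t^R(N, R/𝔪^i) → Tor_t^R(N, R/𝔪^{i−i₀})` induced by the canonical surjection
`R/𝔪^i → R/𝔪^{i−i₀}` is the zero map; that is, the inverse tower
`(Tor_t^R(N, R/𝔪^j))_j` is nilpotent. -/
theorem tor_tower_nilpotent {R : Type u} [CommRing R] [IsNoetherianRing R] [IsLocalRing R]
    (N : Type u) [AddCommGroup N] [Module R N] [Module.Finite R N]
    (t : ℕ) (ht : 1 ≤ t) :
    ∃ i₀ : ℕ, ∀ i, i₀ ≤ i →
      ((Tor (ModuleCat.{u} R) t).obj (ModuleCat.of R N)).map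
        (ModuleCat.ofHom (quotPowMap (IsLocalRing.maximalIdeal R) (Nat.sub_le i i₀))) = 0 :=
  ModuleCat.exists_Tor_map_quotPowMap_eq_zero _ ht N
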